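/- arXiv:1211.0012 — 3 statements merged into one kernel-verified Lean document; each statement's English description precedes it below -/
import Mathlib

section
/- Let Q_1, ..., Q_n be vectors in ℝ^k and let I be a nonempty subset of {1,...,n}. Let S_I be the linear span of {Q_j : j ∈ I} and let Δ_I ⊆ S_I be the cone of linear combinations of {Q_j : j ∈ I} with nonnegative coefficients. Then a vector σ ∈ ℝ^k lies in the interior of Δ_I (as a subset of the topological space S_I) if and only if σ can be written as σ = Σ_{j∈I} λ^j Q_j with all coefficients λ^j strictly positive. -/
/-!
The cone `Δ_I` is the image of the nonnegative orthant under the linear map `c ↦ ∑ c_j Q_j`,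
which maps onto the finite-dimensional space `S_I` and is therefore open; the image of the
open positive orthant is thus an open subset of `Δ_I`, containing every strictly positive
combination. Conversely, if `σ` is interior then `σ - t ∑ Q_j` still lies in `Δ_I` for some
`t > 0`, and adding `t` back to each of its coefficients makes them all positive.
-/

open Set Topology Submodule

section Combination

variable {ι E : Type*} [AddCommGroup E] [Module ℝ E]

def combinationMap (s : Finset ι) (v : ι → E) : (ι → ℝ) →ₗ[ℝ] E :=
  ∑ j ∈ s, (LinearMap.proj j).smulRight (v j)

def finsetCone (s : Finset ι) (v : ι → E) : Set E :=
  {x | ∃ lam : ι → ℝ, (∀ j ∈ s, 0 ≤ lam j) ∧ x = ∑ j ∈ s, lam j • v j}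

theorem combinationMap_apply (s : Finset ι) (v : ι → E) (c : ι → ℝ) :
    combinationMap s v c = ∑ j ∈ s, c j • v j := by
  simp [combinationMap]

theorem range_combinationMap (s : Finset ι) (v : ι → E) :
    LinearMap.range (combinationMap s v) = span ℝ (v '' s) := by
  ext x
  simp [combinationMap_apply, mem_span_image_finset_iff_exists_fun']

end Combination

section Topology

variable {E : Type*} [AddCommGroup E] [Module ℝ E] [TopologicalSpace E]

theorem exists_pos_sub_smul_mem_of_mem_interior [ContinuousSub E] [ContinuousSMul ℝ E]
    {K : Set E} {a : E} (ha : a ∈ interior K) (d : E) : ∃ t > (0 : ℝ), a - t • d ∈ K := by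
  have hcont : Continuous fun t : ℝ => a - t • d := by fun_prop
  have hnear : ∀ᶠ t in 𝓝 (0 : ℝ), a - t • d ∈ K :=
    hcont.continuousAt.preimage_mem_nhds (by simpa using mem_interior_iff_mem_nhds.1 ha)
  have hpos : ∀ᶠ t in 𝓝[>] (0 : ℝ), 0 < t := self_mem_nhdsWithin
  exact (hpos.and (hnear.filter_mono nhdsWithin_le_nhds)).exists

theorem isOpen_val_preimage_image_of_range_eq [IsTopologicalAddGroup E] [ContinuousSMul ℝ E]
    [T2Space E] {F : Type*} [AddCommGroup F] [Module ℝ F] [TopologicalSpace F]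
    [IsTopologicalAddGroup F] [ContinuousSMul ℝ F] {p : Submodule ℝ E} [FiniteDimensional ℝ p]
    {f : F →ₗ[ℝ] E} (hf : LinearMap.range f = p) {U : Set F} (hU : IsOpen U) :
    IsOpen ((↑) ⁻¹' (f '' U) : Set p) := by
  let g := f.codRestrict p fun x => hf ▸ LinearMap.mem_range_self f x
  have hg : Function.Surjective g := by
    rintro ⟨y, hy⟩
    obtain ⟨x, rfl⟩ := LinearMap.mem_range.1 (hf ▸ hy)
    exact ⟨x, rfl⟩
  have himage : ((↑) ⁻¹' (f '' U) : Set p) = g '' U := by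
    ext y
    simp [g, Subtype.ext_iff]
  exact himage ▸ g.isOpenMap_of_finiteDimensional hg U hU

end Topology

section Cone

variable {ι E : Type*} [AddCommGroup E] [Module ℝ E] [TopologicalSpace E]
  [IsTopologicalAddGroup E] [ContinuousSMul ℝ E]

theorem exists_pos_combination_of_mem_interior_finsetCone {s : Finset ι} {v : ι → E} {x : E}
    (hx : x ∈ span ℝ (v '' s))
    (hint : (⟨x, hx⟩ : span ℝ (v '' s)) ∈ interior ((↑) ⁻¹' finsetCone s v)) :
    ∃ lam : ι → ℝ, (∀ j ∈ s, 0 < lam j) ∧ x = ∑ j ∈ s, lam j • v j := by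
  have hsum : ∑ j ∈ s, v j ∈ span ℝ (v '' s) :=
    sum_mem fun j hj => subset_span (mem_image_of_mem v hj)
  obtain ⟨t, ht, lam, hlam, hsub⟩ := exists_pos_sub_smul_mem_of_mem_interior hint ⟨_, hsum⟩
  refine ⟨fun j => lam j + t, fun j hj => by linarith [hlam j hj], ?_⟩
  have hsub' : x - t • ∑ j ∈ s, v j = ∑ j ∈ s, lam j • v j := hsub
  simp only [add_smul, Finset.sum_add_distrib, ← Finset.smul_sum, ← hsub', sub_add_cancel]

theorem mem_interior_finsetCone_of_pos [T2Space E] {s : Finset ι} {v : ι → E} {lam : ι → ℝ}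
    (hlam : ∀ j ∈ s, 0 < lam j) :
    ∃ hx : ∑ j ∈ s, lam j • v j ∈ span ℝ (v '' s),
      (⟨_, hx⟩ : span ℝ (v '' s)) ∈ interior ((↑) ⁻¹' finsetCone s v) := by
  have hrange := range_combinationMap s v
  have hx : ∑ j ∈ s, lam j • v j ∈ span ℝ (v '' s) :=
    hrange ▸ combinationMap_apply s v lam ▸ LinearMap.mem_range_self _ lam
  have : FiniteDimensional ℝ (span ℝ (v '' s)) :=
    FiniteDimensional.span_of_finite ℝ (s.finite_toSet.image v)
  let U : Set (ι → ℝ) := (s : Set ι).pi fun _ => Ioi 0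
  have hU : IsOpen U := isOpen_set_pi s.finite_toSet fun _ _ => isOpen_Ioi
  refine ⟨hx, mem_interior.2 ⟨_, ?_, isOpen_val_preimage_image_of_range_eq hrange hU, ?_⟩⟩
  · rintro y ⟨c, hc, hcy⟩
    exact ⟨c, fun j hj => (hc j hj).le, hcy ▸ combinationMap_apply s v c⟩
  · exact ⟨lam, hlam, combinationMap_apply s v lam⟩

theorem mem_interior_finsetCone_iff [T2Space E] (s : Finset ι) (v : ι → E) (x : E) :
    (∃ hx : x ∈ span ℝ (v '' s),
        (⟨x, hx⟩ : span ℝ (v '' s)) ∈ interior ((↑) ⁻¹' finsetCone s v)) ↔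
      ∃ lam : ι → ℝ, (∀ j ∈ s, 0 < lam j) ∧ x = ∑ j ∈ s, lam j • v j := by
  constructor
  · rintro ⟨hx, hint⟩
    exact exists_pos_combination_of_mem_interior_finsetCone hx hint
  · rintro ⟨lam, hlam, rfl⟩
    exact mem_interior_finsetCone_of_pos hlam

end Cone

theorem stmt_0_general {k n : ℕ} (Q : Fin n → EuclideanSpace ℝ (Fin k))
    (I : Finset (Fin n))
    (S : Submodule ℝ (EuclideanSpace ℝ (Fin k)))
    (hS : S = Submodule.span ℝ (Q '' (I : Set (Fin n))))
    (Δ : Set (EuclideanSpace ℝ (Fin k)))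
    (hΔ : Δ = {x | ∃ lam : Fin n → ℝ, (∀ j ∈ I, 0 ≤ lam j) ∧ x = ∑ j ∈ I, lam j • Q j})
    (σ : EuclideanSpace ℝ (Fin k)) :
    (∃ hσ : σ ∈ S, (⟨σ, hσ⟩ : S) ∈ interior ((Subtype.val : S → EuclideanSpace ℝ (Fin k)) ⁻¹' Δ)) ↔
      ∃ lam : Fin n → ℝ, (∀ j ∈ I, 0 < lam j) ∧ σ = ∑ j ∈ I, lam j • Q j := by
  subst hS hΔ
  exact mem_interior_finsetCone_iff I Q σ

/-- σ lies in the interior of the cone Δ_I (as a subset of the span S_I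
of {Q_j : j ∈ I}, with its subspace topology) iff σ is a strictly positive linear
combination of the Q_j, j ∈ I. -/
theorem stmt_0 {k n : ℕ} (Q : Fin n → EuclideanSpace ℝ (Fin k))
    (I : Finset (Fin n)) (hI : I.Nonempty)
    (S : Submodule ℝ (EuclideanSpace ℝ (Fin k)))
    (hS : S = Submodule.span ℝ (Q '' (I : Set (Fin n))))
    (Δ : Set (EuclideanSpace ℝ (Fin k)))
    (hΔ : Δ = {x | ∃ lam : Fin n → ℝ, (∀ j ∈ I, 0 ≤ lam j) ∧ x = ∑ j ∈ I, lam j • Q j})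
    (σ : EuclideanSpace ℝ (Fin k)) :
    (∃ hσ : σ ∈ S, (⟨σ, hσ⟩ : S) ∈ interior ((Subtype.val : S → EuclideanSpace ℝ (Fin k)) ⁻¹' Δ)) ↔
      ∃ lam : Fin n → ℝ, (∀ j ∈ I, 0 < lam j) ∧ σ = ∑ j ∈ I, lam j • Q j :=
  stmt_0_general Q I S hS Δ hΔ σ
end

section
/- Let Q_1, ..., Q_n be vectors in ℝ^k and let τ ∈ ℝ^k be a nonzero vector that lies in the cone Δ = {Σ_j λ^j Q_j : λ^j ≥ 0} but does not lie in any proper subspace of ℝ^k spanned by a proper subset of the Q_j's. If I ⊆ I' are nonempty subsets of {1,...,n} and τ = Σ_{j∈I} λ^j Q_j with all λ^j > 0, then τ can also be written as τ = Σ_{j∈I'} μ^j Q_j with all μ^j > 0. -/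
/-- under hypothesis (H1), a strictly positive representation of τ over a
nonempty index set I extends to a strictly positive representation over any larger
index set I'. -/
theorem stmt_1 {k n : ℕ} (Q : Fin n → EuclideanSpace ℝ (Fin k))
    (τ : EuclideanSpace ℝ (Fin k)) (hτ : τ ≠ 0)
    (hΔ : ∃ lam : Fin n → ℝ, (∀ j, 0 ≤ lam j) ∧ τ = ∑ j, lam j • Q j)
    (hH1 : ∀ J : Finset (Fin n), J ≠ Finset.univ →
      Submodule.span ℝ (Q '' (J : Set (Fin n))) ≠ ⊤ →
      τ ∉ Submodule.span ℝ (Q '' (J : Set (Fin n))))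
    (I I' : Finset (Fin n)) (hne : I.Nonempty) (hne' : I'.Nonempty) (hsub : I ⊆ I')
    (lam : Fin n → ℝ) (hpos : ∀ j ∈ I, 0 < lam j) (hτI : τ = ∑ j ∈ I, lam j • Q j) :
    ∃ mu : Fin n → ℝ, (∀ j ∈ I', 0 < mu j) ∧ τ = ∑ j ∈ I', mu j • Q j := by
  by_cases hII : I = I'
  · exact ⟨lam, hII ▸ hpos, hII ▸ hτI⟩
  · have hIu : I ≠ Finset.univ := by
      intro h
      exact hII (le_antisymm hsub (h ▸ Finset.subset_univ I'))
    have hτmem : τ ∈ Submodule.span ℝ (Q '' (I : Set (Fin n))) := by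
      rw [hτI]
      exact Submodule.sum_mem _ fun j hj =>
        Submodule.smul_mem _ _ (Submodule.subset_span ⟨j, hj, rfl⟩)
    have hspan : Submodule.span ℝ (Q '' (I : Set (Fin n))) = ⊤ := by
      by_contra h
      exact hH1 I hIu h hτmem
    set v := ∑ j ∈ I' \ I, Q j with hvdef
    have hv : v ∈ Submodule.span ℝ (Q '' (I : Set (Fin n))) := by
      rw [hspan]; trivial
    rw [Set.image_eq_range] at hv
    rw [Submodule.mem_span_range_iff_exists_fun] at hv
    obtain ⟨c0, hc0⟩ := hv
    set c : Fin n → ℝ := fun j => if h : j ∈ I then c0 ⟨j, h⟩ else 0 with hcdef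
    have hc : ∑ j ∈ I, c j • Q j = v := by
      rw [← hc0, ← Finset.sum_coe_sort I (fun j => c j • Q j)]
      refine Finset.sum_congr rfl fun i _ => ?_
      simp [hcdef, i.2]
    set ε : ℝ := I.inf' hne (fun j => lam j / (|c j| + 1)) with hεdef
    have hεpos : 0 < ε := by
      rw [hεdef, Finset.lt_inf'_iff]
      intro j hj
      have := hpos j hj
      positivity
    have hεlt : ∀ j ∈ I, ε * |c j| < lam j := by
      intro j hj
      have h1 : ε ≤ lam j / (|c j| + 1) := Finset.inf'_le _ hj
      have h2 : 0 < lam j := hpos j hj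
      have h3 : 0 ≤ |c j| := abs_nonneg _
      have h4 : ε * |c j| ≤ lam j / (|c j| + 1) * |c j| :=
        mul_le_mul_of_nonneg_right h1 h3
      have h5 : lam j / (|c j| + 1) * |c j| < lam j := by
        rw [div_mul_eq_mul_div, div_lt_iff₀ (by linarith)]
        nlinarith
      linarith
    refine ⟨fun j => if j ∈ I then lam j - ε * c j else ε, ?_, ?_⟩
    · intro j hj
      by_cases h : j ∈ I
      · simp only [h, if_true]
        have := hεlt j h
        have := le_abs_self (c j)
        have := hεpos
        nlinarith [abs_nonneg (c j)]
      · simp [h, hεpos]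
    · have hsplit := Finset.sum_sdiff (f := fun j =>
        (if j ∈ I then lam j - ε * c j else ε) • Q j) hsub
      rw [← hsplit]
      have h1 : ∑ j ∈ I' \ I, (if j ∈ I then lam j - ε * c j else ε) • Q j = ε • v := by
        rw [hvdef, Finset.smul_sum]
        refine Finset.sum_congr rfl fun j hj => ?_
        rw [if_neg (Finset.mem_sdiff.mp hj).2]
      have h2 : ∑ j ∈ I, (if j ∈ I then lam j - ε * c j else ε) • Q j
          = τ - ε • v := by
        rw [← hc, hτI, Finset.smul_sum, ← Finset.sum_sub_distrib]
        refine Finset.sum_congr rfl fun j hj => ?_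
        rw [if_pos hj, sub_smul, smul_smul]
      rw [h1, h2]
      abel
end

section
/- Let Q_1, ..., Q_n ∈ ℝ^k, let w ∈ ℂ^n, let I_w = {j : w_j ≠ 0}, and let σ ∈ ℝ^k. Suppose σ = Σ_{j ∈ I_w} λ^j Q_j with all λ^j > 0. Then there exists t ∈ ℝ^k such that Σ_{j ∈ I_w} Q_j · |w_j|² · e^{2⟨Q_j, t⟩} = σ; that is, the (ℂ*)^k-orbit of w under the action with weights Q_j meets the zero level set of the moment map ν(z) = -(i/2)(Σ_j Q_j|z_j|² - σ). -/
open Filter Real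
open scoped RealInnerProductSpace

/-!
With `c i = ‖w i‖ ^ 2` over the indices with `w i ≠ 0`, the Kempf–Ness function
`f t = ∑ i, c i * exp ⟪Q i, t⟫ - ⟪σ, t⟫` has gradient `∑ i, (c i * exp ⟪Q i, t⟫) • Q i - σ`, so
any global minimiser `t` of `f` gives the theorem at `t / 2`. Since `σ = ∑ i, λ i • Q i`, we have
`f t = F (⟪Q i, t⟫)ᵢ` with `F a = ∑ i, (c i * exp (a i) - λ i * a i)`; as `c i, λ i > 0`, each
summand tends to `+∞` in both directions, so `F` is coercive on `ι → ℝ` and attains its minimum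
on the closed subspace `{(⟪Q i, t⟫)ᵢ | t}`.
-/

theorem tendsto_mul_exp_sub_mul_cocompact_atTop {c l : ℝ} (hc : 0 < c) (hl : 0 < l) :
    Tendsto (fun a => c * exp a - l * a) (cocompact ℝ) atTop := by
  rw [cocompact_eq_atBot_atTop, tendsto_sup]
  constructor
  · simp only [sub_eq_add_neg, ← mul_neg]
    exact tendsto_atTop_add_left_of_le _ 0 (fun a => (mul_pos hc (exp_pos a)).le)
      (tendsto_neg_atBot_atTop.const_mul_atTop hl)
  · have h := (tendsto_atTop_add_const_right _ (-l)
      (tendsto_mul_exp_add_div_pow_atTop c 0 1 hc)).atTop_mul_atTop₀ tendsto_id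
    refine h.congr' ((eventually_ne_atTop 0).mono fun a ha => ?_)
    simp only [id, add_zero, pow_one]
    field_simp
    ring

theorem tendsto_sum_apply_cocompact_atTop {ι : Type*} [Fintype ι] {X : ι → Type*}
    [∀ i, TopologicalSpace (X i)] {f : ∀ i, X i → ℝ} (hbdd : ∀ i, BddBelow (Set.range (f i)))
    (hf : ∀ i, Tendsto (f i) (cocompact (X i)) atTop) :
    Tendsto (fun x : ∀ i, X i => ∑ i, f i (x i)) (cocompact (∀ i, X i)) atTop := by
  classical
  choose m hm using hbdd
  rw [← coprodᵢ_cocompact, Filter.coprodᵢ, tendsto_iSup]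
  intro i
  simp only [← Finset.sum_erase_add _ _ (Finset.mem_univ i)]
  exact tendsto_atTop_add_left_of_le _ _
    (fun x => Finset.sum_le_sum fun j _ => hm j ⟨x j, rfl⟩) ((hf i).comp tendsto_comap)

theorem Continuous.exists_forall_le_comp_linearMap {E V : Type*} [AddCommGroup E] [Module ℝ E]
    [NormedAddCommGroup V] [NormedSpace ℝ V] [FiniteDimensional ℝ V] (A : E →ₗ[ℝ] V) {F : V → ℝ}
    (hF : Continuous F) (hF_tendsto : Tendsto F (cocompact V) atTop) :
    ∃ t₀, ∀ t, F (A t₀) ≤ F (A t) := by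
  obtain ⟨_, ⟨t₀, rfl⟩, hmin⟩ := hF.continuousOn.exists_isMinOn' (s := Set.range A)
    (LinearMap.coe_range A ▸ (LinearMap.range A).closed_of_finiteDimensional) ⟨0, rfl⟩
    ((hF_tendsto.eventually_ge_atTop (F (A 0))).filter_mono inf_le_left)
  exact ⟨t₀, fun t => hmin ⟨t, rfl⟩⟩

variable {E ι : Type*} [NormedAddCommGroup E] [InnerProductSpace ℝ E] [Fintype ι]

noncomputable def kempfNess (Q : ι → E) (c : ι → ℝ) (σ : E) (t : E) : ℝ :=
  ∑ i, c i * exp ⟪Q i, t⟫ - ⟪σ, t⟫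

theorem hasFDerivAt_kempfNess (Q : ι → E) (c : ι → ℝ) (σ t : E) :
    HasFDerivAt (kempfNess Q c σ) (innerSL ℝ (∑ i, (c i * exp ⟪Q i, t⟫) • Q i - σ)) t := by
  have hterm : ∀ i, HasFDerivAt (fun s => c i * exp ⟪Q i, s⟫)
      ((c i * exp ⟪Q i, t⟫) • innerSL ℝ (Q i)) t := fun i => by
    simpa [smul_smul] using ((innerSL ℝ (Q i)).hasFDerivAt.exp).const_mul (c i)
  refine ((HasFDerivAt.fun_sum (u := Finset.univ) fun i _ => hterm i).sub
    (innerSL ℝ σ).hasFDerivAt).congr_fderiv ?_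
  simp [map_sum, map_smul]

theorem exists_forall_kempfNess_le (Q : ι → E) {c l : ι → ℝ} (hc : ∀ i, 0 < c i)
    (hl : ∀ i, 0 < l i) :
    ∃ t₀, ∀ t, kempfNess Q c (∑ i, l i • Q i) t₀ ≤ kempfNess Q c (∑ i, l i • Q i) t := by
  let A : E →ₗ[ℝ] ι → ℝ := LinearMap.pi fun i => innerₛₗ ℝ (Q i)
  let F : (ι → ℝ) → ℝ := fun a => ∑ i, (c i * exp (a i) - l i * a i)
  have hF : ∀ t, kempfNess Q c (∑ i, l i • Q i) t = F (A t) := fun t => by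
    simp [kempfNess, F, A, sum_inner, real_inner_smul_left, Finset.sum_sub_distrib]
  have hF_tendsto : Tendsto F (cocompact (ι → ℝ)) atTop := by
    have h := fun i => tendsto_mul_exp_sub_mul_cocompact_atTop (hc i) (hl i)
    refine tendsto_sum_apply_cocompact_atTop (fun i => ?_) h
    have hcont : Continuous fun a => c i * exp a - l i * a := by fun_prop
    obtain ⟨a₀, ha₀⟩ := hcont.exists_forall_le (h i)
    exact ⟨_, Set.forall_mem_range.2 ha₀⟩
  simp only [hF]
  exact Continuous.exists_forall_le_comp_linearMap A (by fun_prop) hF_tendsto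

theorem exists_sum_mul_exp_inner_smul_eq (Q : ι → E) {c l : ι → ℝ} (hc : ∀ i, 0 < c i)
    (hl : ∀ i, 0 < l i) : ∃ t, ∑ i, (c i * exp ⟪Q i, t⟫) • Q i = ∑ i, l i • Q i := by
  obtain ⟨t₀, ht₀⟩ := exists_forall_kempfNess_le Q hc hl
  refine ⟨t₀, ?_⟩
  have h := IsLocalMin.hasFDerivAt_eq_zero (Eventually.of_forall ht₀) (hasFDerivAt_kempfNess ..)
  rw [← sub_eq_zero, ← norm_eq_zero, ← innerSL_apply_norm ℝ, h, norm_zero]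

/-- if σ = Σ_{j : w_j ≠ 0} λ^j Q_j with strictly positive coefficients,
then there is t ∈ ℝ^k with Σ_j |w_j|² e^{2⟨Q_j,t⟩} Q_j = σ, i.e. the (ℂ*)^k-orbit of w
meets the zero level set of the moment map. -/
theorem stmt_12 {k n : ℕ} (Q : Fin n → EuclideanSpace ℝ (Fin k))
    (w : Fin n → ℂ) (σ : EuclideanSpace ℝ (Fin k)) (lam : Fin n → ℝ)
    (hpos : ∀ j, w j ≠ 0 → 0 < lam j) (hzero : ∀ j, w j = 0 → lam j = 0)
    (hσ : σ = ∑ j, lam j • Q j) :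
    ∃ t : EuclideanSpace ℝ (Fin k),
      ∑ j, (‖w j‖ ^ 2 * Real.exp (2 * (inner ℝ (Q j) t : ℝ))) • Q j = σ := by
  let J := {j // w j ≠ 0}
  obtain ⟨t, ht⟩ := exists_sum_mul_exp_inner_smul_eq (fun j : J => Q j)
    (c := fun j => ‖w j‖ ^ 2) (l := fun j => lam j) (fun j => pow_pos (norm_pos_iff.2 j.2) 2)
    fun j => hpos j j.2
  have hsum_J : ∀ f : Fin n → EuclideanSpace ℝ (Fin k), (∀ j, w j = 0 → f j = 0) →
      ∑ j : J, f j = ∑ j, f j := fun f hf =>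
    Fintype.sum_of_injective Subtype.val Subtype.val_injective _ _
      (fun j hj => hf j (not_not.1 fun hw => hj ⟨⟨j, hw⟩, rfl⟩)) fun _ => rfl
  refine ⟨(2 : ℝ)⁻¹ • t, ?_⟩
  rw [hσ, ← hsum_J, ← hsum_J]
  · simpa [real_inner_smul_right] using ht
  · intro j hj; simp [hzero j hj]
  · intro j hj; simp [hj]
end
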